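/- arXiv:1507.04449 — 4 statements merged into one kernel-verified Lean document; each statement's English description precedes it below -/
import Mathlib

section
/- Let E be a topological graph. Then the boundary-path space ∂E := E^∞ ⊔ {μ ∈ E^* : s(μ) ∈ E_sg^0} coincides exactly with the set ∂_Y E of Yeend boundary paths of E. -/
/-!
Infinite paths are boundary paths in Yeend's sense because the paths of a compact set `K` have
bounded length, so exhaustivity applied to a long initial segment yields a prefix lying in `K`.
For a finite path `μ` with `s μ` regular, pick an open `N ∋ s μ` with `r⁻¹ (closure N)` compact:
the single edges with range in `closure N` form a compact exhaustive set avoiding the vertex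
`s μ`. For `s μ` singular, lift a tail of `μ` through local inverses of `s` to a continuous
family of paths with source `w`, for `w` near `s μ`. Having a prefix in `K` is a closed
condition, so if no prefix of the tail lay in `K`, the same would hold for all `w` near `s μ`.
Exhaustivity then forces every such `w` into `r E¹`, which rules out `s μ ∈ closure E⁰_sce`, and
puts every edge with range near `s μ` into the compact set of edges of paths of `K`, which makes
`s μ` a vertex of `E⁰_fin`.
-/

open Set Topology Filter

namespace TopGraphPaper

variable {V E : Type*}

/-- The set `E^0_fin` of vertices with a neighborhood whose closure has compact `r`-preimage. -/
def Vfin [TopologicalSpace V] [TopologicalSpace E] (r : E → V) : Set V :=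
  {v | ∃ N : Set V, IsOpen N ∧ v ∈ N ∧ IsCompact (r ⁻¹' closure N)}

/-- The set `E^0_sce` of sources. -/
def Vsce [TopologicalSpace V] (r : E → V) : Set V := (closure (Set.range r))ᶜ

/-- The set `E^0_rg` of regular vertices. -/
def Vrg [TopologicalSpace V] [TopologicalSpace E] (r : E → V) : Set V :=
  Vfin r \ closure (Vsce r)

/-- The set `E^0_sg` of singular vertices. -/
def Vsg [TopologicalSpace V] [TopologicalSpace E] (r : E → V) : Set V := (Vrg r)ᶜ

/-- Compatibility condition defining a finite path: the source of each edge is the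
range of the next one. -/
def IsPath (r s : E → V) {n : ℕ} (μ : Fin n → E) : Prop :=
  ∀ (i : ℕ) (h : i + 1 < n), s (μ ⟨i, by omega⟩) = r (μ ⟨i + 1, h⟩)

/-- The space `E^n` of paths of length `n` (`n ≥ 1`), topologized as a subspace of `(E^1)^n`. -/
abbrev PathSpace (r s : E → V) (n : ℕ) := {μ : Fin n → E // IsPath r s μ}

/-- The finite-path space `E^* = ⨿ₙ E^n`: a path of length `0` is a vertex, and a path of
positive length `n+1` lives in `PathSpace r s (n+1)`.  It carries the disjoint-union
topology. -/
abbrev FinPaths (r s : E → V) := V ⊕ (Σ n : ℕ, PathSpace r s (n + 1))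

/-- The infinite-path space `E^∞`. -/
abbrev InfPaths (r s : E → V) := {μ : ℕ → E // ∀ i, s (μ i) = r (μ (i + 1))}

/-- The range of a finite path. -/
def finRng (r s : E → V) : FinPaths r s → V :=
  Sum.elim id fun x => r (x.2.1 0)

/-- The source of a finite path. -/
def finSrc (r s : E → V) : FinPaths r s → V :=
  Sum.elim id fun x => s (x.2.1 (Fin.last x.1))

/-- The length of a finite path. -/
def finLen (r s : E → V) : FinPaths r s → ℕ :=
  Sum.elim (fun _ => 0) fun x => x.1 + 1

/-- `IsPrefixOf r s α λ` : the finite path `α` is an initial segment of the finite path `λ`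
(equivalently, `λ = α β` for some finite path `β`). -/
def IsPrefixOf (r s : E → V) : FinPaths r s → FinPaths r s → Prop
  | Sum.inl v, q => v = finRng r s q
  | Sum.inr _, Sum.inl _ => False
  | Sum.inr a, Sum.inr b =>
      ∃ h : a.1 ≤ b.1, ∀ j : Fin (a.1 + 1), a.2.1 j = b.2.1 (Fin.castLE (by omega) j)

/-- `K ⊆ E^*` is exhaustive for `W ⊆ E^0`. -/
def Exhaustive (r s : E → V) (K : Set (FinPaths r s)) (W : Set V) : Prop :=
  K ⊆ finRng r s ⁻¹' W ∧
    ∀ q : FinPaths r s, finRng r s q ∈ W →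
      ∃ a ∈ K, IsPrefixOf r s a q ∨ IsPrefixOf r s q a

/-- The segment `μ_{m+1} ⋯ μ_{m+1+j}` (0-indexed: edges `m, …, m+j`) of an infinite path. -/
def infSeg (r s : E → V) (μ : InfPaths r s) (m j : ℕ) : FinPaths r s :=
  Sum.inr ⟨j, ⟨fun i => μ.1 (m + i.1), fun i _ => μ.2 (m + i)⟩⟩

/-- The segment with edges `m, …, m+j` (0-indexed) of a finite path of length `n+1`. -/
def finSeg (r s : E → V) {n : ℕ} (a : PathSpace r s (n + 1)) (m j : ℕ)
    (hmj : m + j ≤ n) : FinPaths r s :=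
  Sum.inr ⟨j, ⟨fun i => a.1 ⟨m + i.1, by have := i.isLt; omega⟩,
    fun i h => a.2 (m + i) (by omega)⟩⟩

/-- Yeend's boundary-path condition for an infinite path. -/
def YeendInf [TopologicalSpace V] [TopologicalSpace E] (r s : E → V)
    (μ : InfPaths r s) : Prop :=
  ∀ (m : ℕ) (K : Set (FinPaths r s)), IsCompact K →
    finRng r s '' K ∈ nhds (r (μ.1 m)) →
    Exhaustive r s K (finRng r s '' K) →
    (Sum.inl (r (μ.1 m)) ∈ K ∨ ∃ j : ℕ, infSeg r s μ m j ∈ K)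

/-- Yeend's boundary-path condition for a finite path. -/
def YeendFin [TopologicalSpace V] [TopologicalSpace E] (r s : E → V)
    (μ : FinPaths r s) : Prop :=
  (∀ x : Σ n : ℕ, PathSpace r s (n + 1), μ = Sum.inr x →
    ∀ (m : ℕ) (hm : m ≤ x.1) (K : Set (FinPaths r s)), IsCompact K →
      finRng r s '' K ∈ nhds (r (x.2.1 ⟨m, by omega⟩)) →
      Exhaustive r s K (finRng r s '' K) →
      (Sum.inl (r (x.2.1 ⟨m, by omega⟩)) ∈ K ∨
        ∃ (j : ℕ) (hj : m + j ≤ x.1), finSeg r s x.2 m j hj ∈ K)) ∧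
  (∀ K : Set (FinPaths r s), IsCompact K →
    finRng r s '' K ∈ nhds (finSrc r s μ) →
    Exhaustive r s K (finRng r s '' K) →
    Sum.inl (finSrc r s μ) ∈ K)

section Paths

variable {r s : E → V}

theorem IsPath.cons {n : ℕ} {q : Fin (n + 1) → E} (hq : IsPath r s q) {g : E}
    (hg : s g = r (q 0)) : IsPath r s (Fin.cons g q : Fin (n + 2) → E)
  | 0, _ => hg
  | i + 1, h => hq i (by omega)

theorem IsPath.snoc {n : ℕ} {q : Fin (n + 1) → E} (hq : IsPath r s q) {g : E}
    (hg : s (q (Fin.last n)) = r g) : IsPath r s (Fin.snoc q g : Fin (n + 2) → E) := by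
  intro i hi
  rcases Nat.lt_or_ge (i + 1) (n + 1) with h | h
  · simpa [Fin.snoc, h, show i < n + 1 by omega] using hq i h
  · obtain rfl : i = n := by omega
    simp only [Fin.snoc, lt_self_iff_false, dite_false, lt_add_iff_pos_right,
      Nat.lt_add_one, dite_true, cast_eq]
    exact hg

def PathSpace.trunc {n : ℕ} (q : PathSpace r s (n + 1)) (k : Fin (n + 1)) :
    PathSpace r s (k + 1) :=
  ⟨fun j => q.1 (Fin.castLE k.isLt j), fun i h => q.2 i (by omega)⟩

def PathSpace.tail {n : ℕ} (q : PathSpace r s (n + 2)) : PathSpace r s (n + 1) :=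
  ⟨Fin.tail q.1, fun i h => q.2 (i + 1) (by omega)⟩

def single (r s : E → V) (g : E) : FinPaths r s :=
  Sum.inr ⟨0, ⟨fun _ => g, fun _ h => absurd h (by omega)⟩⟩

def snoc (r s : E → V) : (p : FinPaths r s) → (g : E) → finSrc r s p = r g → FinPaths r s
  | Sum.inl _, g, _ => single r s g
  | Sum.inr ⟨n, q⟩, g, h => Sum.inr ⟨n + 1, ⟨Fin.snoc q.1 g, q.2.snoc h⟩⟩

def finEdges (r s : E → V) : FinPaths r s → Set E :=
  Sum.elim (fun _ => ∅) fun x => range x.2.1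

theorem isPrefixOf_inl_iff {a : FinPaths r s} {v : V} :
    IsPrefixOf r s a (Sum.inl v) ↔ a = Sum.inl v := by
  rcases a with w | x
  · simp [IsPrefixOf, finRng]
  · simp [IsPrefixOf]

theorem isPrefixOf_inr_iff {a : FinPaths r s} {n : ℕ} {q : PathSpace r s (n + 1)} :
    IsPrefixOf r s a (Sum.inr ⟨n, q⟩) ↔
      a = Sum.inl (r (q.1 0)) ∨ ∃ k : Fin (n + 1), a = Sum.inr ⟨k, q.trunc k⟩ := by
  rcases a with w | ⟨k, b⟩
  · simp [IsPrefixOf, finRng]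
  · simp only [IsPrefixOf, reduceCtorEq, false_or, Sum.inr.injEq, Sigma.mk.injEq]
    constructor
    · rintro ⟨hk, hb⟩
      exact ⟨⟨k, Nat.lt_succ_of_le hk⟩, rfl, heq_of_eq (Subtype.ext (funext hb))⟩
    · rintro ⟨k, rfl, hb⟩
      exact ⟨k.is_le, fun j => congrFun (congrArg Subtype.val (eq_of_heq hb)) j⟩

theorem single_isPrefixOf {n : ℕ} (q : PathSpace r s (n + 1)) :
    IsPrefixOf r s (single r s (q.1 0)) (Sum.inr ⟨n, q⟩) :=
  ⟨Nat.zero_le n, fun j => congrArg q.1 (Fin.ext (Nat.lt_one_iff.1 j.isLt).symm)⟩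

theorem IsPrefixOf.finLen_le {p a : FinPaths r s} (h : IsPrefixOf r s p a) :
    finLen r s p ≤ finLen r s a := by
  rcases p with v | x
  · exact Nat.zero_le _
  · rcases a with w | y
    · exact h.elim
    · exact Nat.succ_le_succ h.1

theorem IsPrefixOf.finEdges_subset {p a : FinPaths r s} (h : IsPrefixOf r s p a) :
    finEdges r s p ⊆ finEdges r s a := by
  rcases p with v | x
  · exact empty_subset _
  · rcases a with w | y
    · exact h.elim
    · rintro _ ⟨j, rfl⟩
      exact ⟨_, (h.2 j).symm⟩

theorem IsPrefixOf.isPrefixOf_or_finSrc_mem_range {p a : FinPaths r s}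
    (h : IsPrefixOf r s p a) : IsPrefixOf r s a p ∨ finSrc r s p ∈ range r := by
  rcases p with v | ⟨n, q⟩
  · rcases a with w | y
    · exact Or.inl h.symm
    · exact Or.inr ⟨_, h.symm⟩
  · rcases a with w | ⟨k, b⟩
    · exact h.elim
    · obtain ⟨hnk, hq⟩ := h
      change n ≤ k at hnk
      rcases (Nat.le_iff_lt_or_eq.1 hnk) with hlt | rfl
      · refine Or.inr ⟨b.1 ⟨n + 1, by omega⟩, ?_⟩
        rw [← b.2 n (by omega)]
        exact congrArg s (hq (Fin.last n)).symm
      · exact Or.inl ⟨le_rfl, fun j => (hq j).symm⟩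

theorem finRng_snoc (p : FinPaths r s) (g : E) (h : finSrc r s p = r g) :
    finRng r s (snoc r s p g h) = finRng r s p := by
  rcases p with v | ⟨n, q⟩
  · exact h.symm
  · exact congrArg r (Fin.snoc_apply_zero (α := fun _ => E) g q.1)

theorem mem_finEdges_snoc (p : FinPaths r s) (g : E) (h : finSrc r s p = r g) :
    g ∈ finEdges r s (snoc r s p g h) := by
  rcases p with v | ⟨n, q⟩
  · exact ⟨0, rfl⟩
  · exact ⟨Fin.last (n + 1), Fin.snoc_last (α := fun _ => E) ..⟩

theorem isPrefixOf_snoc {a p : FinPaths r s} {g : E} {h : finSrc r s p = r g}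
    (ha : IsPrefixOf r s a (snoc r s p g h)) : IsPrefixOf r s a p ∨ a = snoc r s p g h := by
  rcases p with v | ⟨n, q⟩
  · rcases isPrefixOf_inr_iff.1 ha with rfl | ⟨k, rfl⟩
    · exact Or.inl (isPrefixOf_inl_iff.2 (congrArg Sum.inl h.symm))
    · obtain rfl : k = Fin.last 0 := Fin.ext (by omega)
      exact Or.inr rfl
  · rcases isPrefixOf_inr_iff.1 ha with rfl | ⟨k, rfl⟩
    · refine Or.inl (isPrefixOf_inr_iff.2 (Or.inl ?_))
      exact congrArg (Sum.inl ∘ r) (Fin.snoc_apply_zero (α := fun _ => E) g q.1)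
    · rcases Fin.eq_castSucc_or_eq_last k with ⟨k, rfl⟩ | rfl
      · refine Or.inl (isPrefixOf_inr_iff.2 (Or.inr ⟨k, ?_⟩))
        refine congrArg Sum.inr (Sigma.ext rfl (heq_of_eq (Subtype.ext (funext fun j => ?_))))
        exact Fin.snoc_castSucc (α := fun _ => E) (i := Fin.castLE k.isLt j) ..
      · exact Or.inr rfl

variable {K : Set (FinPaths r s)} {W : Set V}

theorem Exhaustive.finSrc_mem_range (hex : Exhaustive r s K W) {p : FinPaths r s}
    (hp : finRng r s p ∈ W) (hpK : ¬∃ a ∈ K, IsPrefixOf r s a p) : finSrc r s p ∈ range r := by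
  obtain ⟨a, haK, hap | hpa⟩ := hex.2 p hp
  · exact absurd ⟨a, haK, hap⟩ hpK
  · exact hpa.isPrefixOf_or_finSrc_mem_range.resolve_left fun hap => hpK ⟨a, haK, hap⟩

theorem Exhaustive.mem_finEdges (hex : Exhaustive r s K W) {p : FinPaths r s}
    (hp : finRng r s p ∈ W) (hpK : ¬∃ a ∈ K, IsPrefixOf r s a p) {g : E}
    (hg : finSrc r s p = r g) : g ∈ ⋃ a ∈ K, finEdges r s a := by
  obtain ⟨a, haK, hap | hpa⟩ := hex.2 (snoc r s p g hg) (by rwa [finRng_snoc])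
  · rcases isPrefixOf_snoc hap with hap | rfl
    · exact absurd ⟨a, haK, hap⟩ hpK
    · exact mem_biUnion haK (mem_finEdges_snoc p g hg)
  · exact mem_biUnion haK (hpa.finEdges_subset (mem_finEdges_snoc p g hg))

end Paths

section Topology

variable [TopologicalSpace V] [TopologicalSpace E] {r s : E → V}

theorem continuous_finRng (hr : Continuous r) : Continuous (finRng r s) :=
  continuous_id.sumElim <| continuous_sigma fun _ =>
    hr.comp ((continuous_apply 0).comp continuous_subtype_val)

theorem isClosed_setOf_exists_isPrefixOf_mem (hr : Continuous r) {K : Set (FinPaths r s)}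
    (hK : IsClosed K) : IsClosed {p | ∃ a ∈ K, IsPrefixOf r s a p} := by
  refine isClosed_sum_iff.2 ⟨?_, isClosed_sigma_iff.2 fun n => ?_⟩
  · convert hK.preimage continuous_inl using 1
    ext v
    simp [isPrefixOf_inl_iff]
  · have htrunc (k : Fin (n + 1)) : Continuous fun q : PathSpace r s (n + 1) => q.trunc k := by
      apply Continuous.subtype_mk
      exact continuous_pi fun j => (continuous_apply _).comp continuous_subtype_val
    have hvertex : IsClosed {q : PathSpace r s (n + 1) | Sum.inl (r (q.1 0)) ∈ K} :=
      hK.preimage <| continuous_inl.comp <|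
        hr.comp ((continuous_apply 0).comp continuous_subtype_val)
    have hprefix (k : Fin (n + 1)) :
        IsClosed {q : PathSpace r s (n + 1) | Sum.inr ⟨k, q.trunc k⟩ ∈ K} :=
      hK.preimage ((continuous_inr.comp
        (continuous_sigmaMk (σ := fun n => PathSpace r s (n + 1)))).comp (htrunc k))
    convert hvertex.union (isClosed_iUnion_of_finite hprefix) using 1
    ext q
    simp only [mem_preimage, mem_ofPred_eq, mem_union, mem_iUnion]
    constructor
    · rintro ⟨a, haK, ha⟩
      rcases isPrefixOf_inr_iff.1 ha with rfl | ⟨k, rfl⟩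
      exacts [Or.inl haK, Or.inr ⟨k, haK⟩]
    · rintro (h | ⟨k, h⟩)
      exacts [⟨_, h, isPrefixOf_inr_iff.2 (Or.inl rfl)⟩,
        ⟨_, h, isPrefixOf_inr_iff.2 (Or.inr ⟨k, rfl⟩)⟩]

theorem isCompact_biUnion_finEdges {K : Set (FinPaths r s)} (hK : IsCompact K) :
    IsCompact (⋃ a ∈ K, finEdges r s a) := by
  obtain ⟨S, t, hS, ht, hSt⟩ :=
    (IsClosedEmbedding.inr.isCompact_preimage hK).sigma_exists_finite_sigma_eq
  convert hS.isCompact_biUnion fun n _ => isCompact_iUnion fun j : Fin (n + 1) =>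
    (ht n).image (f := fun q : PathSpace r s (n + 1) => q.1 j)
      ((continuous_apply j).comp continuous_subtype_val) using 1
  ext g
  constructor
  · rintro ⟨_, ⟨a, rfl⟩, _, ⟨haK, rfl⟩, hg⟩
    rcases a with v | ⟨n, q⟩
    · exact hg.elim
    · obtain ⟨j, rfl⟩ := hg
      have : (⟨n, q⟩ : Σ n, PathSpace r s (n + 1)) ∈ S.sigma t := hSt ▸ haK
      exact mem_biUnion this.1 (mem_iUnion.2 ⟨j, q, this.2, rfl⟩)
  · intro hg
    obtain ⟨n, hn, hg⟩ := mem_iUnion₂.1 hg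
    obtain ⟨j, q, hq, rfl⟩ := mem_iUnion.1 hg
    have : (⟨n, q⟩ : Σ n, PathSpace r s (n + 1)) ∈ Sum.inr ⁻¹' K := hSt ▸ ⟨hn, hq⟩
    exact mem_biUnion this ⟨j, rfl⟩

theorem mem_Vsg_iff {v : V} : v ∈ Vsg r ↔ (v ∈ Vfin r → v ∈ closure (Vsce r)) := by
  simp [Vsg, Vrg]

theorem mem_Vfin_of_preimage_subset [LocallyCompactSpace V] [T2Space V] (hr : Continuous r)
    {U : Set V} (hU : IsOpen U) {v : V} (hv : v ∈ U) {C : Set E} (hC : IsCompact C)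
    (hUC : r ⁻¹' U ⊆ C) : v ∈ Vfin r := by
  obtain ⟨N, hN, hvN, hNU⟩ := exists_compact_subset hU hv
  refine ⟨interior N, isOpen_interior, hvN, hC.of_isClosed_subset
    (isClosed_closure.preimage hr) fun g hg => hUC (hNU ?_)⟩
  exact closure_minimal interior_subset hN.isClosed hg

theorem exists_isPrefixOf_mem_of_mem_Vsg [LocallyCompactSpace V] [T2Space V] [T2Space E]
    (hr : Continuous r) {K : Set (FinPaths r s)} (hK : IsCompact K)
    (hex : Exhaustive r s K (finRng r s '' K)) {O : Set V} (hO : IsOpen O)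
    {φ : V → FinPaths r s} (hφ : ContinuousOn φ O) (hsrc : ∀ w ∈ O, finSrc r s (φ w) = w)
    {v : V} (hvO : v ∈ O) (hv : v ∈ Vsg r) (hW : finRng r s '' K ∈ 𝓝 (finRng r s (φ v))) :
    ∃ a ∈ K, IsPrefixOf r s a (φ v) := by
  by_contra hvK
  set U := O ∩ φ ⁻¹' (finRng r s ⁻¹' interior (finRng r s '' K) ∩
    {p | ∃ a ∈ K, IsPrefixOf r s a p}ᶜ)
  have hU : IsOpen U := hφ.isOpen_inter_preimage hO <|
    (isOpen_interior.preimage (continuous_finRng hr)).inter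
      (isClosed_setOf_exists_isPrefixOf_mem hr hK.isClosed).isOpen_compl
  have hvU : v ∈ U := ⟨hvO, mem_interior_iff_mem_nhds.2 hW, hvK⟩
  by_cases hfin : v ∈ Vfin r
  · obtain ⟨w, hwU, hwsce⟩ := mem_closure_iff.1 (mem_Vsg_iff.1 hv hfin) U hU hvU
    have hw : w ∈ range r :=
      hsrc w hwU.1 ▸ hex.finSrc_mem_range (interior_subset hwU.2.1) hwU.2.2
    exact hwsce (subset_closure hw)
  · refine hfin (mem_Vfin_of_preimage_subset hr hU hvU (isCompact_biUnion_finEdges hK) ?_)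
    exact fun g hg => hex.mem_finEdges (interior_subset hg.2.1) hg.2.2 (hsrc _ hg.1)

theorem exists_continuousOn_finSrc_eq (hr : Continuous r) (hs : IsLocalHomeomorph s) :
    ∀ {n : ℕ} (p : PathSpace r s (n + 1)), ∃ (O : Set V) (φ : V → PathSpace r s (n + 1)),
      IsOpen O ∧ ContinuousOn φ O ∧ (∀ w ∈ O, s ((φ w).1 (Fin.last n)) = w) ∧
        s (p.1 (Fin.last n)) ∈ O ∧ φ (s (p.1 (Fin.last n))) = p
  | 0, p => by
    obtain ⟨e, hpe, rfl⟩ := hs (p.1 0)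
    refine ⟨e.target, fun w => ⟨fun _ => e.symm w, fun _ h => absurd h (by omega)⟩,
      e.open_target, ?_, fun w hw => e.right_inv hw, e.map_source hpe, ?_⟩
    · exact IsInducing.subtypeVal.continuousOn_iff.2
        (continuousOn_pi.2 fun _ => e.continuousOn_symm)
    · refine Subtype.ext (funext fun i => ?_)
      obtain rfl : i = 0 := Fin.ext (by omega)
      exact e.left_inv hpe
  | n + 1, p => by
    classical
    obtain ⟨O', ψ, hO', hψ, hψs, hpO', hψp⟩ := exists_continuousOn_finSrc_eq hr hs p.tail
    replace hψp : ψ (s (p.1 (Fin.last (n + 1)))) = p.tail := hψp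
    obtain ⟨e, hpe, hse⟩ := hs (p.1 0)
    have hp1 : r (p.tail.1 0) = e (p.1 0) := (p.2 0 (by omega)).symm.trans (congrFun hse _)
    have hψ' : ContinuousOn (fun w => (ψ w).1) O' := IsInducing.subtypeVal.continuousOn_iff.1 hψ
    have hψ0 : ContinuousOn (fun w => r ((ψ w).1 0)) O' :=
      hr.comp_continuousOn (continuousOn_pi.1 hψ' 0)
    set O := O' ∩ (fun w => r ((ψ w).1 0)) ⁻¹' e.target
    have hsσ {w} (hw : w ∈ O) : s (e.symm (r ((ψ w).1 0))) = r ((ψ w).1 0) :=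
      (congrFun hse _).trans (e.right_inv hw.2)
    set φ₀ : V → Fin (n + 2) → E := fun w => Fin.cons (e.symm (r ((ψ w).1 0))) (ψ w).1
    have hφ₀ : ContinuousOn φ₀ O := continuousOn_pi.2 fun i => by
      refine Fin.cases ?_ (fun j => ?_) i
      · exact e.continuousOn_symm.comp (hψ0.mono inter_subset_left) fun w hw => hw.2
      · exact (continuousOn_pi.1 hψ' j).mono inter_subset_left
    have hpO : s (p.1 (Fin.last (n + 1))) ∈ O := ⟨hpO', by
      simp only [mem_preimage, hψp, hp1]
      exact e.map_source hpe⟩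
    refine ⟨O, fun w => if hw : w ∈ O then ⟨φ₀ w, (ψ w).2.cons (hsσ hw)⟩ else p,
      hψ0.isOpen_inter_preimage hO' e.open_target, ?_, fun w hw => ?_, hpO, ?_⟩
    · exact IsInducing.subtypeVal.continuousOn_iff.2
        (hφ₀.congr fun w hw => congrArg Subtype.val (dif_pos hw))
    · simpa only [dif_pos hw, φ₀, ← Fin.succ_last, Fin.cons_succ] using hψs w hw.1
    · refine Subtype.ext ?_
      simp only [dif_pos hpO, φ₀, hψp, hp1, e.left_inv hpe]
      exact Fin.cons_self_tail p.1

theorem yeendInf (μ : InfPaths r s) : YeendInf r s μ := by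
  intro m K hK hW hex
  have hlen : Continuous (finLen r s) :=
    continuous_const.sumElim <| continuous_sigma fun n =>
      (continuous_const : Continuous fun _ : PathSpace r s (n + 1) => n + 1)
  obtain ⟨N, hN⟩ := (hK.image hlen).finite_of_discrete.bddAbove
  obtain ⟨a, haK, ha | ha⟩ := hex.2 (infSeg r s μ m N) (mem_of_mem_nhds hW)
  · rcases isPrefixOf_inr_iff.1 ha with rfl | ⟨k, rfl⟩
    exacts [Or.inl haK, Or.inr ⟨k, haK⟩]
  · exact absurd (ha.finLen_le.trans (hN (mem_image_of_mem _ haK))) (Nat.not_succ_le_self N)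

theorem inl_mem_of_mem_Vsg [LocallyCompactSpace V] [T2Space V] [T2Space E] (hr : Continuous r)
    {v : V} (hv : v ∈ Vsg r) {K : Set (FinPaths r s)} (hK : IsCompact K)
    (hW : finRng r s '' K ∈ 𝓝 v) (hex : Exhaustive r s K (finRng r s '' K)) :
    (Sum.inl v : FinPaths r s) ∈ K := by
  obtain ⟨a, haK, ha⟩ := exists_isPrefixOf_mem_of_mem_Vsg hr hK hex isOpen_univ
    continuous_inl.continuousOn (fun _ _ => rfl) (mem_univ v) hv hW
  rwa [isPrefixOf_inl_iff.1 ha] at haK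

theorem inl_mem_or_finSeg_mem_of_mem_Vsg [LocallyCompactSpace V] [T2Space V] [T2Space E]
    (hr : Continuous r) (hs : IsLocalHomeomorph s) {n : ℕ} (q : PathSpace r s (n + 1))
    (hq : s (q.1 (Fin.last n)) ∈ Vsg r) {m : ℕ} (hm : m ≤ n) {K : Set (FinPaths r s)}
    (hK : IsCompact K) (hW : finRng r s '' K ∈ 𝓝 (r (q.1 ⟨m, by omega⟩)))
    (hex : Exhaustive r s K (finRng r s '' K)) :
    Sum.inl (r (q.1 ⟨m, by omega⟩)) ∈ K ∨
      ∃ (j : ℕ) (hj : m + j ≤ n), finSeg r s q m j hj ∈ K := by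
  set L := n - m
  let tail : PathSpace r s (L + 1) :=
    ⟨fun i => q.1 ⟨m + i, by omega⟩, fun i _ => q.2 (m + i) (by omega)⟩
  have htail : s (tail.1 (Fin.last L)) = s (q.1 (Fin.last n)) :=
    congrArg (s ∘ q.1) (Fin.ext (by simp [L]; omega))
  obtain ⟨O, φ, hO, hφ, hφs, hvO, hφv⟩ := exists_continuousOn_finSrc_eq hr hs tail
  obtain ⟨a, haK, ha⟩ := exists_isPrefixOf_mem_of_mem_Vsg (φ := fun w => Sum.inr ⟨L, φ w⟩)
    hr hK hex hO ((continuous_inr.comp continuous_sigmaMk).comp_continuousOn hφ) hφs hvO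
    (htail ▸ hq) (by rwa [hφv])
  rw [hφv, isPrefixOf_inr_iff] at ha
  rcases ha with rfl | ⟨k, rfl⟩
  exacts [Or.inl haK, Or.inr ⟨k, by omega, haK⟩]

theorem exists_exhaustive_inl_notMem_of_mem_Vrg [T2Space V] (hr : Continuous r) {v : V}
    (hv : v ∈ Vrg r) : ∃ K : Set (FinPaths r s), IsCompact K ∧ finRng r s '' K ∈ 𝓝 v ∧
      Exhaustive r s K (finRng r s '' K) ∧ (Sum.inl v : FinPaths r s) ∉ K := by
  obtain ⟨⟨N, hN, hvN, hNc⟩, hvsce⟩ := hv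
  have hsingle : Continuous (single r s) := by
    refine continuous_inr.comp <|
      (continuous_sigmaMk (σ := fun n => PathSpace r s (n + 1))).comp ?_
    exact (continuous_pi fun _ => continuous_id).subtype_mk _
  set S := r '' (r ⁻¹' closure N)
  have hKS : finRng r s '' (single r s '' (r ⁻¹' closure N)) = S := image_image ..
  refine ⟨single r s '' (r ⁻¹' closure N), hNc.image hsingle, hKS ▸ ?_,
    ⟨fun a ha => mem_image_of_mem _ ha, fun p hp => ?_⟩,
    fun ⟨_, _, h⟩ => Sum.inr_ne_inl h⟩
  · refine mem_of_superset ((hN.sdiff isClosed_closure).mem_nhds ⟨hvN, hvsce⟩) fun w hw => ?_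
    have hwr : w ∈ closure (N ∩ range r) :=
      hN.inter_closure ⟨hw.1, not_not.1 fun h => hw.2 (subset_closure h)⟩
    refine (hNc.image hr).isClosed.closure_subset (closure_mono ?_ hwr)
    rintro _ ⟨hN', g, rfl⟩
    exact ⟨g, subset_closure hN', rfl⟩
  rcases p with w | ⟨n, q⟩
  · obtain ⟨a, ha, haw⟩ := hp
    exact ⟨a, ha, Or.inr haw.symm⟩
  · obtain ⟨g, hg, hgq⟩ : r (q.1 0) ∈ S := hKS ▸ hp
    have hq : r (q.1 0) ∈ closure N := hgq ▸ hg
    exact ⟨single r s (q.1 0), mem_image_of_mem _ hq, Or.inl (single_isPrefixOf q)⟩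

theorem yeendFin_iff [LocallyCompactSpace V] [T2Space V] [T2Space E] (hr : Continuous r)
    (hs : IsLocalHomeomorph s) (μ : FinPaths r s) : YeendFin r s μ ↔ finSrc r s μ ∈ Vsg r := by
  refine ⟨fun hμ => ?_, fun hμ => ⟨?_, fun K hK hW hex => inl_mem_of_mem_Vsg hr hμ hK hW hex⟩⟩
  · by_contra h
    obtain ⟨K, hK, hW, hex, hμK⟩ :=
      exists_exhaustive_inl_notMem_of_mem_Vrg (s := s) hr (not_not.1 h)
    exact hμK (hμ.2 K hK hW hex)
  · rintro ⟨n, q⟩ rfl m hm K hK hW hex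
    exact inl_mem_or_finSeg_mem_of_mem_Vsg hr hs q hμ hm hK hW hex

end Topology

theorem boundary_paths_eq_yeend_boundary_paths_general
    [TopologicalSpace V] [TopologicalSpace E]
    [LocallyCompactSpace V] [T2Space V] [T2Space E]
    (r s : E → V) (hr : Continuous r) (hs : IsLocalHomeomorph s) :
    {p : FinPaths r s ⊕ InfPaths r s |
        Sum.elim (fun f => finSrc r s f ∈ Vsg r) (fun _ => True) p} =
      {p : FinPaths r s ⊕ InfPaths r s |
        Sum.elim (YeendFin r s) (YeendInf r s) p} := by
  ext (μ | μ)
  · exact (yeendFin_iff hr hs μ).symm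
  · exact iff_of_true trivial (yeendInf μ)

/-- For a topological graph `E`, the boundary-path space
`∂E = E^∞ ⊔ {μ ∈ E^* : s(μ) ∈ E^0_sg}` coincides with the set `∂_Y E` of Yeend
boundary paths. -/
theorem boundary_paths_eq_yeend_boundary_paths
    [TopologicalSpace V] [TopologicalSpace E]
    [LocallyCompactSpace V] [T2Space V] [LocallyCompactSpace E] [T2Space E]
    (r s : E → V) (hr : Continuous r) (hs : IsLocalHomeomorph s) :
    {p : FinPaths r s ⊕ InfPaths r s |
        Sum.elim (fun f => finSrc r s f ∈ Vsg r) (fun _ => True) p} =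
      {p : FinPaths r s ⊕ InfPaths r s |
        Sum.elim (YeendFin r s) (YeendInf r s) p} :=
  boundary_paths_eq_yeend_boundary_paths_general r s hr hs

end TopGraphPaper
end

section
/- Let E be a topological graph and let n ≥ 1. Then the map r^n : E^n → E^0, r^n(μ) := r(μ_1), is continuous, and the map s^n : E^n → E^0, s^n(μ) := s(μ_n), is a local homeomorphism, so that E_n := (E^0, E^n, r^n, s^n) is again a topological graph. -/
/-!
Splitting off the last edge identifies `E^(n+2)` with the fibre product
`E^(n+1) ×_{s^(n+1), r} E^1`, under which `s^(n+2)` becomes `s ∘ pr₂`. Since the pullback of a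
local homeomorphism along a continuous map is again a local homeomorphism, induction on `n`
shows that every `s^n` is one. As `V` is Hausdorff, the path condition cuts out a closed subset
of `(E^1)^n`, which is therefore locally compact.
-/

open Set Topology Filter

namespace TopGraphPaper

variable {V E : Type*}

theorem _root_.IsLocalHomeomorph.pullback_snd {X Y Z : Type*} [TopologicalSpace X]
    [TopologicalSpace Y] [TopologicalSpace Z] {f : X → Z} {g : Y → Z}
    (hf : IsLocalHomeomorph f) (hg : Continuous g) :
    IsLocalHomeomorph (fun p : {p : X × Y // f p.1 = g p.2} => p.1.2) := by
  classical
  refine IsLocalHomeomorph.mk _ fun p => ?_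
  obtain ⟨e, hpe, rfl⟩ := hf p.1.1
  have hmem {q : {p : X × Y // e p.1 = g p.2}} (hq : q.1.1 ∈ e.source) : g q.1.2 ∈ e.target :=
    q.2 ▸ e.map_source hq
  refine ⟨{
    toFun := fun q => q.1.2
    invFun := fun y => if h : g y ∈ e.target then ⟨(e.symm (g y), y), e.right_inv h⟩ else p
    source := {q | q.1.1 ∈ e.source}
    target := g ⁻¹' e.target
    map_source' := fun _ => hmem
    map_target' := fun y (hy : g y ∈ e.target) => by simp [hy]
    left_inv' := fun q hq => by
      rw [dif_pos (hmem hq)]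
      exact Subtype.ext (Prod.ext (by simp [← q.2, e.left_inv hq]) rfl)
    right_inv' := fun y (hy : g y ∈ e.target) => by simp [hy]
    open_source := e.open_source.preimage (by fun_prop)
    open_target := e.open_target.preimage hg
    continuousOn_toFun := by fun_prop
    continuousOn_invFun := by
      rw [IsEmbedding.subtypeVal.isInducing.continuousOn_iff]
      refine ((e.continuousOn_symm.comp hg.continuousOn fun _ hy => hy).prodMk
        continuousOn_id).congr fun y (hy : g y ∈ e.target) => ?_
      simp [hy] }, hpe, fun _ _ => rfl⟩

section IsPath

variable {r s : E → V} {n : ℕ}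

theorem isPath_iff_init {μ : Fin (n + 2) → E} :
    IsPath r s μ ↔
      IsPath r s (Fin.init μ) ∧ s (μ (Fin.last n).castSucc) = r (μ (Fin.last (n + 1))) := by
  refine ⟨fun h => ⟨fun i hi => h i (by omega), h n (by omega)⟩, ?_⟩
  rintro ⟨hinit, hlast⟩ i hi
  obtain hi | rfl : i + 1 < n + 1 ∨ i = n := by omega
  · exact hinit i hi
  · exact hlast

theorem isPath_snoc_iff {μ : Fin (n + 1) → E} {e : E} :
    IsPath r s (Fin.snoc μ e : Fin (n + 2) → E) ↔
      IsPath r s μ ∧ s (μ (Fin.last n)) = r e := by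
  rw [isPath_iff_init]
  simp only [Fin.init_snoc, Fin.snoc_castSucc, Fin.snoc_last]

theorem isClosed_setOf_isPath [TopologicalSpace V] [TopologicalSpace E] [T2Space V]
    (hr : Continuous r) (hs : Continuous s) (n : ℕ) :
    IsClosed {μ : Fin n → E | IsPath r s μ} := by
  simp only [IsPath, ofPred_forall]
  exact isClosed_iInter fun _ => isClosed_iInter fun _ =>
    isClosed_eq (hs.comp (continuous_apply _)) (hr.comp (continuous_apply _))

end IsPath

namespace PathSpace

variable [TopologicalSpace V] [TopologicalSpace E]

def lengthOneHomeomorph (r s : E → V) : PathSpace r s 1 ≃ₜ E where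
  toFun μ := μ.1 0
  invFun e := ⟨fun _ => e, fun i h => by omega⟩
  left_inv μ := Subtype.ext (funext fun i => congrArg μ.1 (Subsingleton.elim 0 i))
  right_inv _ := rfl
  continuous_toFun := (continuous_apply 0).comp continuous_subtype_val
  continuous_invFun := by fun_prop

def snocHomeomorph (r s : E → V) (n : ℕ) :
    PathSpace r s (n + 2) ≃ₜ
      {p : PathSpace r s (n + 1) × E // s (p.1.1 (Fin.last n)) = r p.2} where
  toFun μ := ⟨(⟨Fin.init μ.1, (isPath_iff_init.1 μ.2).1⟩, μ.1 (Fin.last _)),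
    (isPath_iff_init.1 μ.2).2⟩
  invFun p := ⟨Fin.snoc p.1.1.1 p.1.2, isPath_snoc_iff.2 ⟨p.1.1.2, p.2⟩⟩
  left_inv μ := Subtype.ext (Fin.snoc_init_self μ.1)
  right_inv p := by simp
  continuous_toFun := by
    have hval : Continuous (Subtype.val : PathSpace r s (n + 2) → Fin (n + 2) → E) :=
      continuous_subtype_val
    exact .subtype_mk (.prodMk (.subtype_mk hval.finInit _) ((continuous_apply _).comp hval)) _
  continuous_invFun := by fun_prop

theorem isLocalHomeomorph_source {r s : E → V} (hr : Continuous r) (hs : IsLocalHomeomorph s)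
    (n : ℕ) : IsLocalHomeomorph (fun μ : PathSpace r s (n + 1) => s (μ.1 (Fin.last n))) := by
  induction n with
  | zero => exact hs.comp (lengthOneHomeomorph r s).isLocalHomeomorph
  | succ n ih =>
    exact (hs.comp (ih.pullback_snd hr)).comp (snocHomeomorph r s n).isLocalHomeomorph

end PathSpace

theorem path_space_is_topological_graph_general
    [TopologicalSpace V] [TopologicalSpace E]
    [T2Space V] [LocallyCompactSpace E] [T2Space E]
    (r s : E → V) (hr : Continuous r) (hs : IsLocalHomeomorph s) (n : ℕ) :
    Continuous (fun μ : PathSpace r s (n + 1) => r (μ.1 0)) ∧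
    IsLocalHomeomorph (fun μ : PathSpace r s (n + 1) => s (μ.1 (Fin.last n))) ∧
    LocallyCompactSpace (PathSpace r s (n + 1)) ∧
    T2Space (PathSpace r s (n + 1)) :=
  ⟨hr.comp ((continuous_apply 0).comp continuous_subtype_val),
    PathSpace.isLocalHomeomorph_source hr hs n,
    (isClosed_setOf_isPath hr hs.continuous (n + 1)).locallyCompactSpace,
    inferInstance⟩

/-- For `n ≥ 1`, the range map `r^n(μ) = r(μ₁)` on `E^n` is continuous
and the source map `s^n(μ) = s(μ_n)` is a local homeomorphism, so that
`E_n = (E^0, E^n, r^n, s^n)` is again a topological graph. -/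
theorem path_space_is_topological_graph
    [TopologicalSpace V] [TopologicalSpace E]
    [LocallyCompactSpace V] [T2Space V] [LocallyCompactSpace E] [T2Space E]
    (r s : E → V) (hr : Continuous r) (hs : IsLocalHomeomorph s) (n : ℕ) :
    Continuous (fun μ : PathSpace r s (n + 1) => r (μ.1 0)) ∧
    IsLocalHomeomorph (fun μ : PathSpace r s (n + 1) => s (μ.1 (Fin.last n))) ∧
    LocallyCompactSpace (PathSpace r s (n + 1)) ∧
    T2Space (PathSpace r s (n + 1)) :=
  path_space_is_topological_graph_general r s hr hs n

end TopGraphPaper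
end

section
/- Let T be a locally compact Hausdorff space and let σ : dom(σ) → ran(σ) be a partial local homeomorphism on T. Then the Renault-Deaconu groupoid Γ(T,σ), equipped with the topology generated by the basic sets U(U,V,k_1,k_2), is a locally compact Hausdorff space, each basic set U(U,V,k_1,k_2) is open, and the first-coordinate projection (t_1,n,t_2) ↦ t_1 from Γ(T,σ) to T is a local homeomorphism; in particular the range map of Γ(T,σ) is a local homeomorphism onto the unit space, i.e., Γ(T,σ) is étale. -/
/-!
Every point `(t₁, k₁ - k₂, t₂)` of `Γ(T, σ)` has a neighbourhood `𝒰(U, W, k₁, k₂)` with `U, W`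
sources of charts of `σ^{k₁}` and `σ^{k₂}`; on it the first projection is inverted by
`t ↦ (t, k₁ - k₂, (σ^{k₂}|_W)⁻¹ (σ^{k₁} t))`, which is continuous because the defining equation
`σ^{l₁} t₁ = σ^{l₂} t₂` of another basic set is, for points of lag `l₁ - l₂ = k₁ - k₂`, either a
consequence of `σ^{k₁} t₁ = σ^{k₂} t₂` or equivalent to it near a given point by local injectivity
of an iterate of `σ`. So the first projection is a local homeomorphism, and local compactness
passes from `T` to `Γ(T, σ)`; Hausdorffness follows from continuity and injectivity of
`(t₁, n, t₂) ↦ (t₁, n, t₂) ∈ T × ℤ × T`, and the range map is the first projection followed by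
the open embedding `t ↦ (t, 0, t)` of the unit space.
-/

open Set Topology Filter

namespace TopGraphPaper

variable {T : Type*}

/-- The domain `dom(σ^k)` of the `k`-th iterate of a partial map with domain `Sdom`
(represented by a total map `f` whose values outside `Sdom` are irrelevant). -/
def domIter (Sdom : Set T) (f : T → T) : ℕ → Set T
  | 0 => Set.univ
  | k + 1 => Sdom ∩ f ⁻¹' domIter Sdom f k

/-- The underlying set of the Renault-Deaconu groupoid `Γ(T, σ)`. -/
def RDRel (Sdom : Set T) (f : T → T) : Set (T × ℤ × T) :=
  {x | ∃ k1 k2 : ℕ, x.2.1 = (k1 : ℤ) - (k2 : ℤ) ∧ x.1 ∈ domIter Sdom f k1 ∧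
    x.2.2 ∈ domIter Sdom f k2 ∧ f^[k1] x.1 = f^[k2] x.2.2}

/-- The Renault-Deaconu groupoid `Γ(T, σ)` as a type. -/
structure RDSpace (Sdom : Set T) (f : T → T) : Type _ where
  x : T × ℤ × T
  mem : x ∈ RDRel Sdom f

/-- The basic set `𝒰(U, W, k₁, k₂)` of the Renault-Deaconu groupoid. -/
def RDBasic (Sdom : Set T) (f : T → T) (U W : Set T) (k1 k2 : ℕ) :
    Set (RDSpace Sdom f) :=
  {g | g.x.1 ∈ U ∧ g.x.2.2 ∈ W ∧ g.x.2.1 = (k1 : ℤ) - (k2 : ℤ) ∧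
    f^[k1] g.x.1 = f^[k2] g.x.2.2}

variable [TopologicalSpace T]

/-- The topology of the Renault-Deaconu groupoid, generated by the basic sets
`𝒰(U, W, k₁, k₂)` where `U ⊆ dom(σ^{k₁})`, `W ⊆ dom(σ^{k₂})` are open, `σ^{k₁}` is
injective on `U` and `σ^{k₂}` is injective on `W`. -/
instance (Sdom : Set T) (f : T → T) : TopologicalSpace (RDSpace Sdom f) :=
  TopologicalSpace.generateFrom
    {A | ∃ (U W : Set T) (k1 k2 : ℕ), IsOpen U ∧ IsOpen W ∧
      U ⊆ domIter Sdom f k1 ∧ W ⊆ domIter Sdom f k2 ∧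
      Set.InjOn f^[k1] U ∧ Set.InjOn f^[k2] W ∧
      A = RDBasic Sdom f U W k1 k2}

/-- The range map of the Renault-Deaconu groupoid, `(t₁, n, t₂) ↦ (t₁, 0, t₁)`. -/
def RDRange (Sdom : Set T) (f : T → T) (g : RDSpace Sdom f) : RDSpace Sdom f :=
  ⟨(g.x.1, 0, g.x.1), 0, 0, by norm_num, Set.mem_univ _, Set.mem_univ _, rfl⟩

theorem _root_.IsLocalHomeomorphOn.of_isLocalHomeomorph_domRestrict {X Y : Type*}
    [TopologicalSpace X] [TopologicalSpace Y] {s : Set X} {f : X → Y} (hs : IsOpen s)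
    (hf : IsLocalHomeomorph (s.domRestrict f)) : IsLocalHomeomorphOn f s := by
  simpa using (isLocalHomeomorph_iff_isLocalHomeomorphOn_univ.mp hf).of_comp_right
    hs.isOpenEmbedding_subtypeVal.isLocalHomeomorph.isLocalHomeomorphOn

theorem _root_.IsLocalHomeomorphOn.eventuallyEq_of_comp_eq {X Y Z : Type*}
    [TopologicalSpace X] [TopologicalSpace Y] [TopologicalSpace Z] {g : Y → Z} {s : Set Y}
    (hg : IsLocalHomeomorphOn g s) {p q : X → Y} {x₀ : X} (hp : ContinuousAt p x₀)
    (hq : ContinuousAt q x₀) (hx₀ : p x₀ ∈ s) (hpq : p x₀ = q x₀)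
    (hgpq : ∀ x, g (p x) = g (q x)) : p =ᶠ[𝓝 x₀] q := by
  obtain ⟨e, hxe, rfl⟩ := hg _ hx₀
  filter_upwards [hp (e.open_source.mem_nhds hxe), hq (e.open_source.mem_nhds (hpq ▸ hxe))]
    with x hpx hqx using e.injOn hpx hqx (hgpq x)

theorem _root_.isLocalHomeomorph_of_exists_continuousOn_section {X Y : Type*}
    [TopologicalSpace X] [TopologicalSpace Y] {p : X → Y} (hp : Continuous p)
    (h : ∀ x, ∃ (B : Set X) (U : Set Y) (s : Y → X), IsOpen B ∧ IsOpen U ∧ x ∈ B ∧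
      MapsTo p B U ∧ MapsTo s U B ∧ LeftInvOn s p B ∧ RightInvOn s p U ∧ ContinuousOn s U) :
    IsLocalHomeomorph p := by
  intro x
  obtain ⟨B, U, s, hB, hU, hxB, hpBU, hsUB, hleft, hright, hs⟩ := h x
  exact ⟨{ toFun := p
           invFun := s
           source := B
           target := U
           map_source' := hpBU
           map_target' := hsUB
           left_inv' := hleft
           right_inv' := hright
           open_source := hB
           open_target := hU
           continuousOn_toFun := hp.continuousOn
           continuousOn_invFun := hs }, hxB, rfl⟩

theorem _root_.IsLocalHomeomorph.locallyCompactSpace {X Y : Type*}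
    [TopologicalSpace X] [TopologicalSpace Y] [LocallyCompactSpace Y] {f : X → Y}
    (hf : IsLocalHomeomorph f) :
    LocallyCompactSpace X := by
  choose e hxe _ using hf
  have : ∀ x, (𝓝 x).HasBasis (fun K ↦ K ∈ 𝓝 (e x x) ∧ IsCompact K ∧ K ⊆ (e x).target)
      fun K ↦ (e x).symm '' K := fun x ↦ by
    rw [← (e x).symm_map_nhds_eq (hxe x)]
    exact ((compact_basis_nhds (e x x)).hasBasis_self_subset
      ((e x).open_target.mem_nhds ((e x).map_source (hxe x)))).map _
  refine .of_hasBasis this ?_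
  rintro x K ⟨-, hK, hKt⟩
  exact hK.image_of_continuousOn ((e x).continuousOn_symm.mono hKt)

variable {Sdom : Set T} {f : T → T}

section

omit [TopologicalSpace T]

@[ext]
theorem RDSpace.ext {g h : RDSpace Sdom f} (H : g.x = h.x) : g = h := by
  cases g; cases h; cases H; rfl

theorem RDSpace.x_injective : Function.Injective (RDSpace.x : RDSpace Sdom f → T × ℤ × T) :=
  fun _ _ ↦ RDSpace.ext

theorem mem_domIter_add {j k : ℕ} {t : T} :
    t ∈ domIter Sdom f (j + k) ↔ t ∈ domIter Sdom f k ∧ f^[k] t ∈ domIter Sdom f j := by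
  induction k generalizing t with
  | zero => simp [domIter]
  | succ k ih =>
    show t ∈ domIter Sdom f (j + k + 1) ↔ _
    simp only [domIter, mem_inter_iff, mem_preimage, ih, Function.iterate_succ_apply]
    tauto

end

theorem isLocalHomeomorphOn_iterate (hσ : IsLocalHomeomorphOn f Sdom) :
    ∀ k : ℕ, IsLocalHomeomorphOn f^[k] (domIter Sdom f k)
  | 0 => fun t _ ↦ ⟨OpenPartialHomeomorph.refl T, mem_univ t, rfl⟩
  | k + 1 => (isLocalHomeomorphOn_iterate hσ k).comp (hσ.mono inter_subset_left)
      fun _ ht ↦ ht.2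

theorem isOpen_domIter (hdom : IsOpen Sdom) (hσ : IsLocalHomeomorphOn f Sdom) :
    ∀ k : ℕ, IsOpen (domIter Sdom f k)
  | 0 => isOpen_univ
  | k + 1 => hσ.continuousOn.isOpen_inter_preimage hdom (isOpen_domIter hdom hσ k)

theorem exists_chart_iterate (hdom : IsOpen Sdom) (hσ : IsLocalHomeomorphOn f Sdom) {k : ℕ}
    {t : T} (ht : t ∈ domIter Sdom f k) :
    ∃ e : OpenPartialHomeomorph T T,
      t ∈ e.source ∧ e.source ⊆ domIter Sdom f k ∧ f^[k] = e := by
  obtain ⟨e, hte, hfe⟩ := isLocalHomeomorphOn_iterate hσ k t ht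
  refine ⟨e.restrOpen _ (isOpen_domIter hdom hσ k), ⟨hte, ht⟩, inter_subset_right, hfe⟩

theorem isOpen_RDBasic {U W : Set T} {k1 k2 : ℕ} (hU : IsOpen U) (hW : IsOpen W)
    (hUdom : U ⊆ domIter Sdom f k1) (hWdom : W ⊆ domIter Sdom f k2)
    (hUinj : InjOn f^[k1] U) (hWinj : InjOn f^[k2] W) :
    IsOpen (RDBasic Sdom f U W k1 k2) :=
  TopologicalSpace.isOpen_generateFrom_of_mem
    ⟨U, W, k1, k2, hU, hW, hUdom, hWdom, hUinj, hWinj, rfl⟩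

theorem isOpen_RDBasic_of_subset_source {e₁ e₂ : OpenPartialHomeomorph T T} {U W : Set T}
    {k1 k2 : ℕ} (he₁ : e₁.source ⊆ domIter Sdom f k1) (he₂ : e₂.source ⊆ domIter Sdom f k2)
    (hfe₁ : f^[k1] = e₁) (hfe₂ : f^[k2] = e₂) (hU : IsOpen U) (hW : IsOpen W)
    (hUe : U ⊆ e₁.source) (hWe : W ⊆ e₂.source) :
    IsOpen (RDBasic Sdom f U W k1 k2) :=
  isOpen_RDBasic hU hW (hUe.trans he₁) (hWe.trans he₂) (hfe₁ ▸ e₁.injOn.mono hUe)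
    (hfe₂ ▸ e₂.injOn.mono hWe)

theorem eventually_nhds_RDSpace (hdom : IsOpen Sdom) (hσ : IsLocalHomeomorphOn f Sdom)
    (g : RDSpace Sdom f) {V₁ V₂ : Set T} (hV₁ : V₁ ∈ 𝓝 g.x.1) (hV₂ : V₂ ∈ 𝓝 g.x.2.2) :
    ∀ᶠ h in 𝓝 g, h.x.1 ∈ V₁ ∧ h.x.2.2 ∈ V₂ ∧ h.x.2.1 = g.x.2.1 := by
  obtain ⟨k1, k2, hlag, hm1, hm2, heq⟩ := g.mem
  obtain ⟨e₁, hg₁, he₁, hfe₁⟩ := exists_chart_iterate hdom hσ hm1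
  obtain ⟨e₂, hg₂, he₂, hfe₂⟩ := exists_chart_iterate hdom hσ hm2
  obtain ⟨O₁, hO₁V, hO₁, hgO₁⟩ := mem_nhds_iff.mp hV₁
  obtain ⟨O₂, hO₂V, hO₂, hgO₂⟩ := mem_nhds_iff.mp hV₂
  have hB := isOpen_RDBasic_of_subset_source he₁ he₂ hfe₁ hfe₂ (e₁.open_source.inter hO₁)
    (e₂.open_source.inter hO₂) inter_subset_left inter_subset_left
  exact mem_of_superset (hB.mem_nhds ⟨⟨hg₁, hgO₁⟩, ⟨hg₂, hgO₂⟩, hlag, heq⟩)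
    fun _ ⟨⟨_, h₁⟩, ⟨_, h₂⟩, hn, _⟩ ↦ ⟨hO₁V h₁, hO₂V h₂, hn.trans hlag.symm⟩

theorem continuous_x (hdom : IsOpen Sdom) (hσ : IsLocalHomeomorphOn f Sdom) :
    Continuous (RDSpace.x : RDSpace Sdom f → T × ℤ × T) := by
  refine continuous_iff_continuousAt.mpr fun g ↦ ?_
  have h₁ : ContinuousAt (fun h : RDSpace Sdom f ↦ h.x.1) g := fun V hV ↦
    (eventually_nhds_RDSpace hdom hσ g hV univ_mem).mono fun _ h ↦ h.1
  have h₂ : ContinuousAt (fun h : RDSpace Sdom f ↦ h.x.2.1) g := fun V hV ↦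
    (eventually_nhds_RDSpace hdom hσ g univ_mem univ_mem).mono fun _ h ↦
      (congrArg (· ∈ V) h.2.2).mpr (mem_of_mem_nhds hV)
  have h₃ : ContinuousAt (fun h : RDSpace Sdom f ↦ h.x.2.2) g := fun V hV ↦
    (eventually_nhds_RDSpace hdom hσ g univ_mem hV).mono fun _ h ↦ h.2.1
  exact h₁.prodMk (h₂.prodMk h₃)

theorem continuous_fst_x (hdom : IsOpen Sdom) (hσ : IsLocalHomeomorphOn f Sdom) :
    Continuous fun g : RDSpace Sdom f ↦ g.x.1 :=
  continuous_fst.comp (continuous_x hdom hσ)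

theorem continuous_RDSpace_mk {X : Type*} [TopologicalSpace X] (hσ : IsLocalHomeomorphOn f Sdom)
    {a b : X → T} {k1 k2 : ℕ} (ha : Continuous a) (hb : Continuous b)
    (hma : ∀ x, a x ∈ domIter Sdom f k1) (hmb : ∀ x, b x ∈ domIter Sdom f k2)
    (hab : ∀ x, f^[k1] (a x) = f^[k2] (b x)) :
    Continuous fun x ↦ (⟨(a x, (k1 : ℤ) - (k2 : ℤ), b x),
      k1, k2, rfl, hma x, hmb x, hab x⟩ : RDSpace Sdom f) := by
  refine continuous_generateFrom_iff.mpr ?_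
  rintro _ ⟨U, W, l1, l2, hU, hW, -, -, -, -, rfl⟩
  refine isOpen_iff_mem_nhds.mpr fun x₀ ⟨hx₀U, hx₀W, hlag, hx₀eq⟩ ↦ ?_
  have hlag : (k1 : ℤ) - k2 = l1 - l2 := hlag
  have heq : ∀ᶠ x in 𝓝 x₀, f^[l1] (a x) = f^[l2] (b x) := by
    rcases le_total k1 l1 with hle | hle
    · obtain ⟨j, rfl⟩ := Nat.exists_eq_add_of_le' hle
      obtain rfl : l2 = j + k2 := by omega
      exact .of_forall fun x ↦ by
        rw [Function.iterate_add_apply, Function.iterate_add_apply, hab x]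
    · obtain ⟨j, rfl⟩ := Nat.exists_eq_add_of_le' hle
      obtain rfl : k2 = j + l2 := by omega
      have hp : Continuous fun x ↦ f^[l1] (a x) :=
        (isLocalHomeomorphOn_iterate hσ l1).continuousOn.comp_continuous ha
          fun x ↦ (mem_domIter_add.mp (hma x)).1
      have hq : Continuous fun x ↦ f^[l2] (b x) :=
        (isLocalHomeomorphOn_iterate hσ l2).continuousOn.comp_continuous hb
          fun x ↦ (mem_domIter_add.mp (hmb x)).1
      refine (isLocalHomeomorphOn_iterate hσ j).eventuallyEq_of_comp_eq hp.continuousAt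
        hq.continuousAt (mem_domIter_add.mp (hma x₀)).2 hx₀eq fun x ↦ ?_
      simpa only [← Function.iterate_add_apply] using hab x
  filter_upwards [ha.continuousAt (hU.mem_nhds hx₀U), hb.continuousAt (hW.mem_nhds hx₀W), heq]
    with x h₁ h₂ h₃ using ⟨h₁, h₂, hlag, h₃⟩

theorem exists_continuousOn_section_fst_x (hdom : IsOpen Sdom) (hσ : IsLocalHomeomorphOn f Sdom)
    (g : RDSpace Sdom f) :
    ∃ (B : Set (RDSpace Sdom f)) (U : Set T) (sec : T → RDSpace Sdom f), IsOpen B ∧ IsOpen U ∧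
      g ∈ B ∧ MapsTo (·.x.1) B U ∧ MapsTo sec U B ∧ LeftInvOn sec (·.x.1) B ∧
      RightInvOn sec (·.x.1) U ∧ ContinuousOn sec U := by
  obtain ⟨k1, k2, hlag, hm1, hm2, heq⟩ := g.mem
  obtain ⟨e₁, hg₁, he₁, hfe₁⟩ := exists_chart_iterate hdom hσ hm1
  obtain ⟨e₂, hg₂, he₂, hfe₂⟩ := exists_chart_iterate hdom hσ hm2
  set U := e₁.source ∩ f^[k1] ⁻¹' e₂.target
  have hU : IsOpen U :=
    (hfe₁ ▸ e₁.continuousOn).isOpen_inter_preimage e₁.open_source e₂.open_target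
  have hUdom : U ⊆ domIter Sdom f k1 := inter_subset_left.trans he₁
  have hlift_mem : ∀ t ∈ U, e₂.symm (f^[k1] t) ∈ e₂.source := fun t ht ↦ e₂.map_target ht.2
  have hlift_eq : ∀ t ∈ U, f^[k1] t = f^[k2] (e₂.symm (f^[k1] t)) := fun t ht ↦ by
    rw [hfe₂, e₂.right_inv ht.2]
  classical
  let sec : T → RDSpace Sdom f := fun t ↦ if h : t ∈ U then
    ⟨(t, (k1 : ℤ) - k2, e₂.symm (f^[k1] t)), k1, k2, rfl, hUdom h, he₂ (hlift_mem t h),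
      hlift_eq t h⟩ else g
  have hsec : ContinuousOn sec U := by
    rw [continuousOn_iff_continuous_domRestrict]
    have hf₁ : Continuous fun t : U ↦ f^[k1] t :=
      (hfe₁ ▸ e₁.continuousOn).comp_continuous continuous_subtype_val fun t ↦ t.2.1
    refine (continuous_RDSpace_mk hσ continuous_subtype_val
      (e₂.continuousOn_symm.comp_continuous hf₁ fun t ↦ t.2.2) (fun t ↦ hUdom t.2)
      (fun t ↦ he₂ (hlift_mem _ t.2)) fun t ↦ hlift_eq _ t.2).congr fun t ↦ ?_
    simp only [domRestrict_apply, Function.comp_apply, sec, dif_pos t.2]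
  refine ⟨RDBasic Sdom f U e₂.source k1 k2, U, sec,
    isOpen_RDBasic_of_subset_source he₁ he₂ hfe₁ hfe₂ hU e₂.open_source inter_subset_left
      subset_rfl, hU, ⟨⟨hg₁, ?_⟩, hg₂, hlag, heq⟩, fun h hh ↦ hh.1, fun t ht ↦ ?_,
    fun h ⟨hh₁, hh₂, hh₃, hh₄⟩ ↦ ?_, fun t ht ↦ ?_, hsec⟩
  · rw [mem_preimage, heq, hfe₂]
    exact e₂.map_source hg₂
  · simp only [sec, dif_pos ht]
    exact ⟨ht, hlift_mem t ht, rfl, hlift_eq t ht⟩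
  · simp only [sec, dif_pos hh₁]
    ext <;> simp only
    · exact hh₃.symm
    · rw [hh₄, hfe₂, e₂.left_inv hh₂]
  · simp only [sec, dif_pos ht]

theorem isLocalHomeomorph_fst_x (hdom : IsOpen Sdom) (hσ : IsLocalHomeomorphOn f Sdom) :
    IsLocalHomeomorph fun g : RDSpace Sdom f ↦ g.x.1 :=
  isLocalHomeomorph_of_exists_continuousOn_section (continuous_fst_x hdom hσ)
    (exists_continuousOn_section_fst_x hdom hσ)

def RDUnit (Sdom : Set T) (f : T → T) (t : T) : RDSpace Sdom f :=
  ⟨(t, 0, t), 0, 0, by norm_num, mem_univ _, mem_univ _, rfl⟩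

theorem isOpenEmbedding_RDUnit (hσ : IsLocalHomeomorphOn f Sdom) :
    IsOpenEmbedding (RDUnit Sdom f) := by
  refine .of_continuous_injective_isOpenMap ?_ (fun t t' h ↦ congrArg (·.x.1) h) fun V hV ↦ ?_
  · convert continuous_RDSpace_mk hσ (k1 := 0) (k2 := 0) continuous_id continuous_id
      (fun _ ↦ mem_univ _) (fun _ ↦ mem_univ _) fun _ ↦ rfl using 1
    funext t
    ext <;> simp [RDUnit]
  · have : RDUnit Sdom f '' V = RDBasic Sdom f V V 0 0 := by
      ext h
      refine ⟨?_, fun ⟨h₁, _, h₃, h₄⟩ ↦ ⟨h.x.1, h₁, ?_⟩⟩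
      · rintro ⟨t, ht, rfl⟩
        exact ⟨ht, ht, rfl, rfl⟩
      · ext <;> simp only [RDUnit]
        · simpa using h₃.symm
        · exact h₄
    rw [this]
    exact isOpen_RDBasic hV hV (subset_univ _) (subset_univ _) (fun _ _ _ _ h ↦ h) fun _ _ _ _ h ↦ h

/-- For a partial local homeomorphism `σ` on a locally compact
Hausdorff space `T`, the Renault-Deaconu groupoid `Γ(T,σ)`, with the topology generated
by the basic sets `𝒰(U, W, k₁, k₂)`, is a locally compact Hausdorff space, the basic
sets are open, and the first-coordinate projection `(t₁, n, t₂) ↦ t₁` is a local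
homeomorphism; in particular the range map `(t₁, n, t₂) ↦ (t₁, 0, t₁)` of `Γ(T,σ)` is a
local homeomorphism onto the unit space, i.e. `Γ(T,σ)` is étale. -/
theorem rd_groupoid_etale
    {T : Type*} [TopologicalSpace T] [LocallyCompactSpace T] [T2Space T]
    (Sdom : Set T) (f : T → T) (hdom : IsOpen Sdom)
    (hf : IsLocalHomeomorph (Sdom.restrict f)) :
    (∀ (U W : Set T) (k1 k2 : ℕ), IsOpen U → IsOpen W →
      U ⊆ domIter Sdom f k1 → W ⊆ domIter Sdom f k2 →
      Set.InjOn f^[k1] U → Set.InjOn f^[k2] W →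
      IsOpen (RDBasic Sdom f U W k1 k2)) ∧
    LocallyCompactSpace (RDSpace Sdom f) ∧
    T2Space (RDSpace Sdom f) ∧
    IsLocalHomeomorph (fun g : RDSpace Sdom f => g.x.1) ∧
    IsLocalHomeomorph (RDRange Sdom f) := by
  have hσ := IsLocalHomeomorphOn.of_isLocalHomeomorph_domRestrict hdom hf
  have hfst := isLocalHomeomorph_fst_x hdom hσ
  exact ⟨fun _ _ _ _ ↦ isOpen_RDBasic, hfst.locallyCompactSpace,
    .of_injective_continuous RDSpace.x_injective (continuous_x hdom hσ), hfst,
    (isOpenEmbedding_RDUnit hσ).isLocalHomeomorph.comp hfst⟩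

end TopGraphPaper
end

section
/- Let T be a locally compact Hausdorff space, let σ : dom(σ) → ran(σ) be a partial local homeomorphism on T, and let Γ(T,σ) be the Renault-Deaconu groupoid with its generated topology. Fix a net ((t_{1,α}, n_α, t_{2,α}))_{α∈A} in Γ(T,σ) and an element (t_1, n, t_2) ∈ Γ(T,σ). Choose k_1, k_2 ≥ 0 such that n = k_1 − k_2, t_1 ∈ dom(σ^{k_1}), t_2 ∈ dom(σ^{k_2}), σ^{k_1}(t_1) = σ^{k_2}(t_2), and such that whenever k_1' ≤ k_1, k_2' ≤ k_2 satisfy n = k_1' − k_2' and σ^{k_1'}(t_1) = σ^{k_2'}(t_2), then k_1' = k_1 and k_2' = k_2. Then (t_{1,α}, n_α, t_{2,α}) → (t_1, n, t_2) in Γ(T,σ) if and only if t_{1,α} → t_1 and t_{2,α} → t_2 in T, and there exists α_0 ∈ A such that for all α ≥ α_0: n_α = n, t_{1,α} ∈ dom(σ^{k_1}), t_{2,α} ∈ dom(σ^{k_2}), and σ^{k_1}(t_{1,α}) = σ^{k_2}(t_{2,α}). -/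
open Set Topology Filter

namespace TopGraphPaper

variable {T : Type*}

variable [TopologicalSpace T]

theorem preimage_open_aux (Sdom : Set T) (f : T → T) (hdom : IsOpen Sdom)
    (hf : IsLocalHomeomorph (Sdom.restrict f)) {V : Set T} (hV : IsOpen V) :
    IsOpen (Sdom ∩ f ⁻¹' V) := by
  have : Sdom ∩ f ⁻¹' V = Subtype.val '' (Sdom.restrict f ⁻¹' V) := by
    ext x
    constructor
    · rintro ⟨hx, hfx⟩
      exact ⟨⟨x, hx⟩, hfx, rfl⟩
    · rintro ⟨⟨y, hy⟩, hfy, rfl⟩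
      exact ⟨hy, hfy⟩
  rw [this]
  exact hdom.isOpenMap_subtype_val _ (hV.preimage hf.continuous)

theorem local_inj_aux (Sdom : Set T) (f : T → T) (hdom : IsOpen Sdom)
    (hf : IsLocalHomeomorph (Sdom.restrict f)) {t : T} (ht : t ∈ Sdom) :
    ∃ U : Set T, IsOpen U ∧ t ∈ U ∧ U ⊆ Sdom ∧ Set.InjOn f U := by
  obtain ⟨e, hte, he⟩ := hf ⟨t, ht⟩
  refine ⟨Subtype.val '' e.source, hdom.isOpenMap_subtype_val _ e.open_source,
    ⟨⟨t, ht⟩, hte, rfl⟩, ?_, ?_⟩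
  · rintro x ⟨⟨y, hy⟩, _, rfl⟩; exact hy
  · rintro x ⟨⟨y, hy⟩, hys, rfl⟩ x' ⟨⟨y', hy'⟩, hy's, rfl⟩ hxy
    have : Sdom.restrict f ⟨y, hy⟩ = Sdom.restrict f ⟨y', hy'⟩ := hxy
    rw [he] at this
    exact congrArg Subtype.val (e.injOn hys hy's this)

theorem local_inj_iter (Sdom : Set T) (f : T → T) (hdom : IsOpen Sdom)
    (hf : IsLocalHomeomorph (Sdom.restrict f)) :
    ∀ (k : ℕ) {t : T}, t ∈ domIter Sdom f k →
      ∃ U : Set T, IsOpen U ∧ t ∈ U ∧ U ⊆ domIter Sdom f k ∧ Set.InjOn f^[k] U := by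
  intro k
  induction k with
  | zero =>
    intro t _
    exact ⟨Set.univ, isOpen_univ, trivial, subset_rfl, fun x _ y _ h => h⟩
  | succ k ih =>
    rintro t ⟨htS, htd⟩
    obtain ⟨V, hVo, hfV, hVsub, hVinj⟩ := ih htd
    obtain ⟨U', hU'o, htU', hU'S, hU'inj⟩ := local_inj_aux Sdom f hdom hf htS
    refine ⟨U' ∩ (Sdom ∩ f ⁻¹' V), hU'o.inter (preimage_open_aux Sdom f hdom hf hVo),
      ⟨htU', htS, hfV⟩, ?_, ?_⟩
    · rintro x ⟨_, hxS, hxV⟩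
      exact ⟨hxS, hVsub hxV⟩
    · intro x hx y hy hxy
      rw [Function.iterate_succ_apply, Function.iterate_succ_apply] at hxy
      exact hU'inj hx.1 hy.1 (hVinj hx.2.2 hy.2.2 hxy)


/-- Characterization of convergent nets in the Renault-Deaconu
groupoid `Γ(T,σ)` of a partial local homeomorphism `σ` on `T`. -/
theorem rd_groupoid_tendsto_iff
    {T : Type*} [TopologicalSpace T] [LocallyCompactSpace T] [T2Space T]
    (Sdom : Set T) (f : T → T) (hdom : IsOpen Sdom)
    (hf : IsLocalHomeomorph (Sdom.restrict f))
    {A : Type*} [Nonempty A] [SemilatticeSup A]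
    (net : A → RDSpace Sdom f) (t1 t2 : T) (n : ℤ)
    (hmem : ((t1, n, t2) : T × ℤ × T) ∈ RDRel Sdom f)
    (k1 k2 : ℕ) (hn : n = (k1 : ℤ) - (k2 : ℤ))
    (h1 : t1 ∈ domIter Sdom f k1) (h2 : t2 ∈ domIter Sdom f k2)
    (heq : f^[k1] t1 = f^[k2] t2)
    (hmin : ∀ k1' k2' : ℕ, k1' ≤ k1 → k2' ≤ k2 → n = (k1' : ℤ) - (k2' : ℤ) →
      f^[k1'] t1 = f^[k2'] t2 → k1' = k1 ∧ k2' = k2) :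
    Filter.Tendsto net Filter.atTop (nhds (⟨(t1, n, t2), hmem⟩ : RDSpace Sdom f)) ↔
      (Filter.Tendsto (fun a => (net a).x.1) Filter.atTop (nhds t1) ∧
       Filter.Tendsto (fun a => (net a).x.2.2) Filter.atTop (nhds t2) ∧
       ∀ᶠ a in Filter.atTop, (net a).x.2.1 = n ∧
         (net a).x.1 ∈ domIter Sdom f k1 ∧ (net a).x.2.2 ∈ domIter Sdom f k2 ∧
         f^[k1] (net a).x.1 = f^[k2] (net a).x.2.2) := by
  have hgen : Filter.Tendsto net Filter.atTop
      (nhds (⟨(t1, n, t2), hmem⟩ : RDSpace Sdom f)) ↔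
      ∀ s ∈ {B : Set (RDSpace Sdom f) | ∃ (U W : Set T) (j1 j2 : ℕ), IsOpen U ∧ IsOpen W ∧
        U ⊆ domIter Sdom f j1 ∧ W ⊆ domIter Sdom f j2 ∧
        Set.InjOn f^[j1] U ∧ Set.InjOn f^[j2] W ∧
        B = RDBasic Sdom f U W j1 j2},
        (⟨(t1, n, t2), hmem⟩ : RDSpace Sdom f) ∈ s → net ⁻¹' s ∈ Filter.atTop :=
    TopologicalSpace.tendsto_nhds_generateFrom_iff
  rw [hgen]
  constructor
  · intro H
    obtain ⟨U, hUo, htU, hUsub, hUinj⟩ := local_inj_iter Sdom f hdom hf k1 h1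
    obtain ⟨W, hWo, htW, hWsub, hWinj⟩ := local_inj_iter Sdom f hdom hf k2 h2
    have hpt : ∀ (V V' : Set T), IsOpen V → IsOpen V' → t1 ∈ V → t2 ∈ V' →
        ∀ᶠ a in Filter.atTop, net a ∈ RDBasic Sdom f (U ∩ V) (W ∩ V') k1 k2 := by
      intro V V' hVo hV'o htV htV'
      apply H
      · exact ⟨U ∩ V, W ∩ V', k1, k2, hUo.inter hVo, hWo.inter hV'o,
          Set.inter_subset_left.trans hUsub, Set.inter_subset_left.trans hWsub,
          hUinj.mono Set.inter_subset_left, hWinj.mono Set.inter_subset_left, rfl⟩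
      · exact ⟨⟨htU, htV⟩, ⟨htW, htV'⟩, hn, heq⟩
    refine ⟨?_, ?_, ?_⟩
    · rw [tendsto_nhds]
      intro V hVo htV
      exact (hpt V Set.univ hVo isOpen_univ htV trivial).mono fun a ha => ha.1.2
    · rw [tendsto_nhds]
      intro V hVo htV
      exact (hpt Set.univ V isOpen_univ hVo trivial htV).mono fun a ha => ha.2.1.2
    · refine (hpt Set.univ Set.univ isOpen_univ isOpen_univ trivial trivial).mono
        fun a ha => ⟨?_, hUsub ha.1.1, hWsub ha.2.1.1, ha.2.2.2⟩
      rw [ha.2.2.1, hn]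
  · rintro ⟨ht1, ht2, hev⟩ s ⟨U, W, j1, j2, hUo, hWo, hUsub, hWsub, _, _, rfl⟩
      ⟨htU, htW, hn', heq'⟩
    -- hn' : n = j1 - j2, heq' : f^[j1] t1 = f^[j2] t2
    have hj1 : k1 ≤ j1 := by
      by_contra hlt
      push_neg at hlt
      have hj2 : j2 ≤ k2 := by
        have := hn.symm.trans hn'
        omega
      have := hmin j1 j2 (le_of_lt hlt) hj2 hn' heq'
      omega
    obtain ⟨m, hm1, hm2⟩ : ∃ m : ℕ, j1 = m + k1 ∧ j2 = m + k2 := by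
      refine ⟨j1 - k1, ?_, ?_⟩ <;> [omega; skip]
      have := hn.symm.trans hn'
      omega
    filter_upwards [hev, ht1 (hUo.mem_nhds htU), ht2 (hWo.mem_nhds htW)]
      with a ha haU haW
    refine ⟨haU, haW, ?_, ?_⟩
    · exact ha.1.trans hn'
    · rw [hm1, hm2, Function.iterate_add_apply, Function.iterate_add_apply]
      exact congrArg f^[m] ha.2.2.2


end TopGraphPaper
end
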